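/- The plane-wave u = a·exp(i·k·(x-ct)) with k = (1/3)(±√(3+c²/a⁴) + c/a²), for any real constants a ≠ 0 and c, is a travelling-wave solution of the NLS-type peakon equation i·v_t + i(Im(ū u_x)v)_x + (1/2)(|u|²-|u_x|²)v = 0, where v = u - u_xx. -/

import Mathlib

open Complex

noncomputable section

def pdt (f : ℝ → ℝ → ℂ) (t x : ℝ) : ℂ := deriv (fun s => f s x) t
def pdx (f : ℝ → ℝ → ℂ) (t x : ℝ) : ℂ := deriv (fun y => f t y) x

/-- NLS-type peakon equation. -/
def NLSPeakonEq (u v : ℝ → ℝ → ℂ) : Prop :=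
  ∀ t x : ℝ,
    Complex.I * pdt v t x
      + Complex.I * pdx (fun t x =>
          (((((starRingEnd ℂ) (u t x)) * pdx u t x).im : ℝ) : ℂ) * v t x) t x
      + (1/2) * ((Complex.normSq (u t x) - Complex.normSq (pdx u t x) : ℝ) : ℂ) * v t x = 0

/-!
On the plane wave `u = a e^{ik(x - ct)}` every term of the equation is a scalar multiple of `u`:
`u_x = iku`, `v = (1 + k²)u`, `v_t = -ikc v`, `|u|² = a²`, `|u_x|² = k²a²` and `Im(ū u_x) = ka²`.
The equation therefore collapses to `-½ (1 + k²)(3a²k² - 2ck - a²) u = 0`, and the given `k` is a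
root of that quadratic by the quadratic formula, with discriminant `4a⁴(3 + c²/a⁴)`.
-/

theorem dispersion_relation_of_eq {a c ε k : ℝ} (ha : a ≠ 0) (hε : ε ^ 2 = 1)
    (hk : k = (1/3) * (ε * Real.sqrt (3 + c^2/a^4) + c/a^2)) :
    3 * a ^ 2 * k ^ 2 - 2 * c * k - a ^ 2 = 0 := by
  have hr : Real.sqrt (3 + c^2/a^4) ^ 2 = 3 + c^2/a^4 := Real.sq_sqrt (by positivity)
  generalize Real.sqrt (3 + c^2/a^4) = r at hk hr
  have hdiscrim :
      discrim (3 * a ^ 2) (-2 * c) (-a ^ 2) = (2 * ε * a ^ 2 * r) * (2 * ε * a ^ 2 * r) := by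
    rw [discrim]
    field_simp at hr
    linear_combination (-4 * a ^ 4 * r ^ 2) * hε - 4 * hr
  have hroot := (quadratic_eq_zero_iff (by positivity) hdiscrim k).2
    (Or.inl (by rw [hk]; field_simp; ring))
  linear_combination hroot

theorem im_conj_mul_I_mul_ofReal_mul (z : ℂ) (r : ℝ) :
    (starRingEnd ℂ z * (I * r * z)).im = r * normSq z := by
  simp only [mul_im, mul_re, conj_re, conj_im, I_re, I_im, ofReal_re, ofReal_im, normSq_apply]
  ring

def planeWave (a k c : ℝ) (t x : ℝ) : ℂ := a * exp (I * k * (x - c * t))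

section PlaneWave

variable (a k c : ℝ)

theorem hasDerivAt_planeWave_x (t x : ℝ) :
    HasDerivAt (fun y => planeWave a k c t y) (I * k * planeWave a k c t x) x := by
  refine ((((hasDerivAt_id x).ofReal_comp.sub_const ((c : ℂ) * t)).const_mul (I * k)).cexp.const_mul
    (a : ℂ)).congr_deriv ?_
  simp only [planeWave, id, ofReal_one]
  ring

theorem hasDerivAt_planeWave_t (t x : ℝ) :
    HasDerivAt (fun s => planeWave a k c s x) (-(I * k * c) * planeWave a k c t x) t := by
  refine (((((hasDerivAt_id t).ofReal_comp.const_mul (c : ℂ)).const_sub (x : ℂ)).const_mul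
    (I * k)).cexp.const_mul (a : ℂ)).congr_deriv ?_
  simp only [planeWave, id, ofReal_one]
  ring

theorem pdx_planeWave (t x : ℝ) : pdx (planeWave a k c) t x = I * k * planeWave a k c t x :=
  (hasDerivAt_planeWave_x a k c t x).deriv

theorem pdx_pdx_planeWave (t x : ℝ) :
    pdx (pdx (planeWave a k c)) t x = -k ^ 2 * planeWave a k c t x := by
  change deriv (fun y => pdx (planeWave a k c) t y) x = _
  simp only [pdx_planeWave]
  rw [((hasDerivAt_planeWave_x a k c t x).const_mul _).deriv]
  linear_combination (k ^ 2 * planeWave a k c t x) * I_sq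

theorem normSq_planeWave (t x : ℝ) : normSq (planeWave a k c t x) = a ^ 2 := by
  rw [planeWave, normSq_mul, normSq_ofReal, normSq_eq_norm_sq, norm_exp]
  simp [sq]

theorem nlsPeakonEq_planeWave (hdisp : 3 * a ^ 2 * k ^ 2 - 2 * c * k - a ^ 2 = 0) :
    NLSPeakonEq (planeWave a k c) (fun t x => (1 + k ^ 2) * planeWave a k c t x) := by
  intro t x
  have hv_t : pdt (fun t x => (1 + k ^ 2) * planeWave a k c t x) t x
      = (1 + k ^ 2) * (-(I * k * c) * planeWave a k c t x) :=
    ((hasDerivAt_planeWave_t a k c t x).const_mul _).deriv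
  have hflux : pdx (fun t x =>
        ((starRingEnd ℂ (planeWave a k c t x) * pdx (planeWave a k c) t x).im : ℂ)
          * ((1 + k ^ 2) * planeWave a k c t x)) t x
      = (k * a ^ 2 * (1 + k ^ 2)) * (I * k * planeWave a k c t x) := by
    change deriv (fun y => _) x = _
    simp only [pdx_planeWave, im_conj_mul_I_mul_ofReal_mul, normSq_planeWave]
    rw [(((hasDerivAt_planeWave_x a k c t x).const_mul _).const_mul _).deriv]
    push_cast
    ring
  have hdispC : (3 * a ^ 2 * k ^ 2 - 2 * c * k - a ^ 2 : ℂ) = 0 := by exact_mod_cast hdisp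
  rw [hv_t, hflux]
  simp only [pdx_planeWave, normSq_planeWave, normSq_mul, normSq_I, normSq_ofReal]
  push_cast
  linear_combination (-(1 + k ^ 2) * planeWave a k c t x / 2) * hdispC
    + ((1 + k ^ 2) * planeWave a k c t x * (k ^ 2 * a ^ 2 - k * c)) * I_sq

end PlaneWave

theorem nls_planewave_solution (a c ε k : ℝ) (ha : a ≠ 0) (hε : ε = 1 ∨ ε = -1)
    (hk : k = (1/3) * (ε * Real.sqrt (3 + c^2/a^4) + c/a^2))
    (u v : ℝ → ℝ → ℂ)
    (hu : ∀ t x : ℝ, u t x = (a : ℂ) *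
      Complex.exp (Complex.I * (k : ℂ) * ((x : ℂ) - (c : ℂ) * t)))
    (hv : ∀ t x : ℝ, v t x = u t x - pdx (pdx u) t x) :
    NLSPeakonEq u v := by
  obtain rfl : u = planeWave a k c := funext₂ hu
  obtain rfl : v = fun t x => (1 + k ^ 2) * planeWave a k c t x :=
    funext₂ fun t x => by rw [hv, pdx_pdx_planeWave]; ring
  exact nlsPeakonEq_planeWave a k c (dispersion_relation_of_eq ha (sq_eq_one_iff.2 hε) hk)
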